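/- arXiv:1801.09411 — 4 statements merged into one kernel-verified Lean document; each statement's English description precedes it below -/
import Mathlib

section
/- A finitely generated torsion-free abelian group G is cyclic if and only if it satisfies the sentence: for all x₁, x₂, x₃ there exists x₄ such that x₁ = x₂·x₄² or x₁ = x₃·x₄² or x₂ = x₃·x₄². -/
/-!
In a cyclic group the exponents of three elements cannot have three different parities, and two
elements whose exponents have the same parity differ by a square. Conversely, a finitely generated
torsion-free abelian group is free abelian; if it had two distinct basis vectors `e, f`, then none
of `e - f`, `e`, `f` would be divisible by two, so the triple `(e, f, 0)` would violate the
sentence.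
-/

open Module

lemma zpow_eq_zpow_mul_sq_of_emod_two_eq {G : Type*} [Group G] (g : G) {a b : ℤ}
    (h : a % 2 = b % 2) : g ^ a = g ^ b * (g ^ ((a - b) / 2)) ^ 2 := by
  rw [← zpow_natCast (g ^ ((a - b) / 2)) 2, ← zpow_mul, ← zpow_add]
  congr 1
  omega

lemma IsCyclic.exists_eq_mul_sq {G : Type*} [Group G] [IsCyclic G] (x₁ x₂ x₃ : G) :
    ∃ x₄ : G, x₁ = x₂ * x₄ ^ 2 ∨ x₁ = x₃ * x₄ ^ 2 ∨ x₂ = x₃ * x₄ ^ 2 := by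
  obtain ⟨g, hg⟩ := IsCyclic.exists_zpow_surjective (G := G)
  obtain ⟨a, rfl⟩ := hg x₁
  obtain ⟨b, rfl⟩ := hg x₂
  obtain ⟨c, rfl⟩ := hg x₃
  have parity : a % 2 = b % 2 ∨ a % 2 = c % 2 ∨ b % 2 = c % 2 := by omega
  rcases parity with h | h | h
  · exact ⟨_, Or.inl (zpow_eq_zpow_mul_sq_of_emod_two_eq g h)⟩
  · exact ⟨_, Or.inr (Or.inl (zpow_eq_zpow_mul_sq_of_emod_two_eq g h))⟩
  · exact ⟨_, Or.inr (Or.inr (zpow_eq_zpow_mul_sq_of_emod_two_eq g h))⟩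

lemma Module.Basis.ne_add_two_smul {ι M : Type*} [AddCommGroup M] (b : Basis ι ℤ M) {i : ι}
    {m : M} (hm : b.repr m i = 0) (y : M) : b i ≠ m + 2 • y := by
  intro h
  have hi := congrArg (fun z => b.repr z i) h
  simp only [Basis.repr_self, Finsupp.single_eq_same, map_add, map_nsmul, Finsupp.add_apply,
    Finsupp.smul_apply, hm, zero_add, nsmul_eq_mul] at hi
  omega

lemma subsingleton_of_basis_of_exists_eq_mul_sq {G ι : Type*} [CommGroup G]
    (b : Basis ι ℤ (Additive G))
    (h : ∀ x₁ x₂ x₃ : G, ∃ x₄ : G, x₁ = x₂ * x₄ ^ 2 ∨ x₁ = x₃ * x₄ ^ 2 ∨ x₂ = x₃ * x₄ ^ 2) :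
    Subsingleton ι := by
  refine ⟨fun i j => by_contra fun hij => ?_⟩
  have toAdd {x y z : G} (hx : x = y * z ^ 2) :
      Additive.ofMul x = Additive.ofMul y + 2 • Additive.ofMul z := by
    rw [hx, ofMul_mul, ofMul_pow]
  obtain ⟨y, hy | hy | hy⟩ := h (b i).toMul (b j).toMul 1
  · exact b.ne_add_two_smul (by simp [hij]) _ (toAdd hy)
  · exact b.ne_add_two_smul (by simp) _ (toAdd hy)
  · exact b.ne_add_two_smul (by simp) _ (toAdd hy)

lemma Module.Basis.isAddCyclic_of_subsingleton {ι M : Type*} [AddCommGroup M] [Subsingleton ι]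
    (b : Basis ι ℤ M) : IsAddCyclic M := by
  rcases isEmpty_or_nonempty ι with _ | ⟨⟨i⟩⟩
  · have : Subsingleton M := Equiv.subsingleton b.repr.toEquiv
    infer_instance
  · exact isAddCyclic_of_surjective ((Finsupp.uniqueLinearEquiv ℤ ℤ i).symm.trans b.repr.symm)
      (LinearEquiv.surjective _)

/-- A finitely generated torsion-free abelian group is cyclic if and only if it satisfies
the `∀∃`-sentence `∀ x₁ x₂ x₃ ∃ x₄, x₁ = x₂x₄² ∨ x₁ = x₃x₄² ∨ x₂ = x₃x₄²`. -/
theorem stmt_0 (G : Type*) [CommGroup G] [Group.FG G]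
    (htf : ∀ g : G, g ≠ 1 → ¬IsOfFinOrder g) :
    IsCyclic G ↔
      ∀ x₁ x₂ x₃ : G, ∃ x₄ : G,
        x₁ = x₂ * x₄ ^ 2 ∨ x₁ = x₃ * x₄ ^ 2 ∨ x₂ = x₃ * x₄ ^ 2 := by
  refine ⟨fun _ => IsCyclic.exists_eq_mul_sq, fun h => ?_⟩
  have : IsMulTorsionFree G := isMulTorsionFree_iff_not_isOfFinOrder.mpr htf
  let b := Free.chooseBasis ℤ (Additive G)
  have := subsingleton_of_basis_of_exists_eq_mul_sq b h
  exact isAddCyclic_additive_iff.mp b.isAddCyclic_of_subsingleton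
end

section
/- Let G be a K-CSA group and let g, h ∈ G be elements of infinite order. If ⟨g, h⟩ is virtually abelian, then g^{K!} and h^{K!} commute, and g and h lie in the same maximal virtually abelian subgroup M(g) = M(h). -/
/-- A subgroup `M` is virtually abelian if it has an abelian subgroup of finite index. -/
def IsVirtAbelian {G : Type*} [Group G] (M : Subgroup G) : Prop :=
  ∃ A : Subgroup G, A ≤ M ∧ (∀ x ∈ A, ∀ y ∈ A, x * y = y * x) ∧ A.relIndex M ≠ 0

/-- A subgroup `M` is `K`-virtually abelian if it has an abelian subgroup of index at most `K`. -/
def IsKVirtAbelian {G : Type*} [Group G] (K : ℕ) (M : Subgroup G) : Prop :=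
  ∃ A : Subgroup G, A ≤ M ∧ (∀ x ∈ A, ∀ y ∈ A, x * y = y * x) ∧
    A.relIndex M ≠ 0 ∧ A.relIndex M ≤ K

/-- `M` is `K`-virtually torsion-free abelian: it has a torsion-free abelian subgroup of
index at most `K`. -/
def IsKVirtTorsionFreeAbelian {G : Type*} [Group G] (K : ℕ) (M : Subgroup G) : Prop :=
  ∃ A : Subgroup G, A ≤ M ∧ (∀ x ∈ A, ∀ y ∈ A, x * y = y * x) ∧
    (∀ x ∈ A, x ≠ 1 → ¬ IsOfFinOrder x) ∧ A.relIndex M ≠ 0 ∧ A.relIndex M ≤ K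

/-- `M` is the (unique) maximal virtually abelian subgroup containing `g`: it is virtually
abelian, contains `g`, and contains every virtually abelian subgroup containing `g`. -/
def IsMaxVirtAbelianOf {G : Type*} [Group G] (g : G) (M : Subgroup G) : Prop :=
  g ∈ M ∧ IsVirtAbelian M ∧ ∀ M' : Subgroup G, g ∈ M' → IsVirtAbelian M' → M' ≤ M

/-- `G` is a `K`-CSA group: every finite subgroup has order at most `K`; every element of
infinite order lies in a unique maximal virtually abelian subgroup `M(g)`, which is
`K`-virtually torsion-free abelian and equal to its own normalizer. -/
def IsKCSAGroup (K : ℕ) (G : Type*) [Group G] : Prop :=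
  0 < K ∧
  (∀ H : Subgroup G, (H : Set G).Finite → Nat.card H ≤ K) ∧
  (∀ g : G, ¬ IsOfFinOrder g → ∃ M : Subgroup G,
    IsMaxVirtAbelianOf g M ∧ IsKVirtTorsionFreeAbelian K M ∧ Subgroup.normalizer (M : Set G) = M)

/-!
Since `⟨g, h⟩` is virtually abelian and contains `g`, it lies in `M(g)`, which has an abelian
subgroup `A` of index at most `K`. Every index up to `K` divides `K!`, so `K!`-th powers of
elements of `M(g)` lie in `A` and commute. Likewise `⟨g, h⟩ ≤ M(h)`, so each of `M(g)`, `M(h)`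
is a virtually abelian subgroup containing the other's defining element, and maximality gives
`M(g) = M(h)`.
-/

section

variable {G : Type*} [Group G]

lemma Subgroup.pow_factorial_mem_of_relIndex_le {A M : Subgroup G} {K : ℕ}
    (hne : A.relIndex M ≠ 0) (hK : A.relIndex M ≤ K) {x : G} (hx : x ∈ M) :
    x ^ K.factorial ∈ A :=
  (pow_mem_of_relIndex_ne_zero_of_dvd hne hx
    fun _ hm hle => Nat.dvd_factorial hm (hle.trans hK)).1

lemma IsKVirtTorsionFreeAbelian.isKVirtAbelian {K : ℕ} {M : Subgroup G}
    (hM : IsKVirtTorsionFreeAbelian K M) : IsKVirtAbelian K M :=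
  let ⟨A, hAM, hab, _, hne, hK⟩ := hM
  ⟨A, hAM, hab, hne, hK⟩

lemma IsKVirtAbelian.commute_pow_factorial {K : ℕ} {M : Subgroup G} (hM : IsKVirtAbelian K M)
    {x y : G} (hx : x ∈ M) (hy : y ∈ M) : Commute (x ^ K.factorial) (y ^ K.factorial) :=
  let ⟨_, _, hab, hne, hK⟩ := hM
  hab _ (Subgroup.pow_factorial_mem_of_relIndex_le hne hK hx)
    _ (Subgroup.pow_factorial_mem_of_relIndex_le hne hK hy)

lemma IsMaxVirtAbelianOf.eq_of_mem_virtAbelian {g h : G} {M M' H : Subgroup G}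
    (hM : IsMaxVirtAbelianOf g M) (hM' : IsMaxVirtAbelianOf h M') (hH : IsVirtAbelian H)
    (hg : g ∈ H) (hh : h ∈ H) : M = M' :=
  le_antisymm (hM'.2.2 M (hM.2.2 H hg hH hh) hM.2.1) (hM.2.2 M' (hM'.2.2 H hh hH hg) hM'.2.1)

end

theorem stmt_5_general {G : Type*} [Group G] {K : ℕ} (hG : IsKCSAGroup K G) (g h : G)
    (hg : ¬ IsOfFinOrder g)
    (hva : IsVirtAbelian (Subgroup.closure ({g, h} : Set G))) :
    Commute (g ^ K.factorial) (h ^ K.factorial) ∧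
      ∀ M M' : Subgroup G,
        IsMaxVirtAbelianOf g M → IsMaxVirtAbelianOf h M' → M = M' := by
  have hgc : g ∈ Subgroup.closure ({g, h} : Set G) :=
    Subgroup.subset_closure (Set.mem_insert _ _)
  have hhc : h ∈ Subgroup.closure ({g, h} : Set G) :=
    Subgroup.subset_closure (Set.mem_insert_of_mem _ rfl)
  refine ⟨?_, fun M M' hM hM' => hM.eq_of_mem_virtAbelian hM' hva hgc hhc⟩
  obtain ⟨M, hM, hMK, -⟩ := hG.2.2 g hg
  have hle : Subgroup.closure ({g, h} : Set G) ≤ M := hM.2.2 _ hgc hva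
  exact hMK.isKVirtAbelian.commute_pow_factorial (hle hgc) (hle hhc)

/-- In a `K`-CSA group, if `g`, `h` have infinite order and `⟨g,h⟩` is virtually abelian,
then `g^{K!}` and `h^{K!}` commute and `M(g) = M(h)`. -/
theorem stmt_5 {G : Type*} [Group G] {K : ℕ} (hG : IsKCSAGroup K G) (g h : G)
    (hg : ¬ IsOfFinOrder g) (hh : ¬ IsOfFinOrder h)
    (hva : IsVirtAbelian (Subgroup.closure ({g, h} : Set G))) :
    Commute (g ^ K.factorial) (h ^ K.factorial) ∧
      ∀ M M' : Subgroup G,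
        IsMaxVirtAbelianOf g M → IsMaxVirtAbelianOf h M' → M = M' :=
  stmt_5_general hG g h hg hva
end

section
/- Let G be a virtually abelian, finitely generated K-CSA group containing an element of infinite order, and suppose that for all x, y ∈ G the subgroup ⟨x^{K!}, y^{K!}⟩ is cyclic. Then G is virtually cyclic. -/
open Subgroup

namespace Subgroup

variable {G : Type*} [Group G]

theorem exists_zpowers_eq_closure_of_forall_isCyclic_closure_pair {H : Subgroup G}
    (hH : ∀ x ∈ H, ∀ y ∈ H, IsCyclic (closure ({x, y} : Set G))) (s : Finset G)
    (hs : (s : Set G) ⊆ H) : ∃ c, zpowers c = closure (s : Set G) := by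
  classical
  induction s using Finset.induction_on with
  | empty => exact ⟨1, by simp⟩
  | insert x s _ ih =>
    rw [Finset.coe_insert, Set.insert_subset_iff] at hs
    obtain ⟨c, hc⟩ := ih hs.2
    have hcH : c ∈ H := closure_le H |>.mpr hs.2 (hc ▸ mem_zpowers c)
    have hclosure : closure (insert x (s : Set G)) = closure {x, c} := by
      rw [Set.insert_eq, closure_union, ← hc, zpowers_eq_closure, ← closure_union,
        ← Set.insert_eq]
    rw [Finset.coe_insert, hclosure]
    exact (Subgroup.isCyclic_iff_exists_zpowers_eq_top _).mp (hH x hs.1 c hcH)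

theorem exists_zpowers_eq_of_fg_of_forall_isCyclic_closure_pair {H : Subgroup G}
    (hfg : H.FG) (hH : ∀ x ∈ H, ∀ y ∈ H, IsCyclic (closure ({x, y} : Set G))) : ∃ c, zpowers c = H := by
  obtain ⟨s, rfl⟩ := hfg
  exact exists_zpowers_eq_closure_of_forall_isCyclic_closure_pair hH s subset_closure

open scoped IsMulCommutative in
theorem finiteIndex_map_subtype_range_powMonoidHom [Group.FG G] {A : Subgroup G}
    [IsMulCommutative A] [A.FiniteIndex] {n : ℕ} (hn : n ≠ 0) :
    ((powMonoidHom n : A →* A).range.map A.subtype).FiniteIndex := by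
  have : Group.FG A := fg_of_index_ne_zero A
  have := finiteIndex_range_powMonoidHom_of_fg A hn
  rw [finiteIndex_iff, index_map_subtype]
  exact mul_ne_zero this.index_ne_zero FiniteIndex.index_ne_zero

end Subgroup

open scoped IsMulCommutative in
theorem stmt_7_general {G : Type*} [Group G] [Group.FG G] {K : ℕ}
    (hva : IsVirtAbelian (⊤ : Subgroup G))
    (hcyc : ∀ x y : G,
      IsCyclic (Subgroup.closure ({x ^ K.factorial, y ^ K.factorial} : Set G))) :
    ∃ c : G, (Subgroup.zpowers c).FiniteIndex := by
  obtain ⟨A, -, hcomm, hidx⟩ := hva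
  have : IsMulCommutative A := ⟨⟨fun a b => Subtype.ext (hcomm a a.2 b b.2)⟩⟩
  have : A.FiniteIndex := ⟨by rwa [relIndex_top_right] at hidx⟩
  have : Group.FG A := fg_of_index_ne_zero A
  set P := (powMonoidHom K.factorial : A →* A).range.map A.subtype
  have hPfg : P.FG := by
    have := Group.fg_range (A.subtype.comp (powMonoidHom K.factorial))
    rwa [MonoidHom.range_comp, Group.fg_iff_subgroup_fg] at this
  have hPcyc : ∀ x ∈ P, ∀ y ∈ P, IsCyclic (closure ({x, y} : Set G)) := by
    rintro _ ⟨_, ⟨a, rfl⟩, rfl⟩ _ ⟨_, ⟨b, rfl⟩, rfl⟩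
    exact hcyc a b
  obtain ⟨c, hc⟩ := exists_zpowers_eq_of_fg_of_forall_isCyclic_closure_pair hPfg hPcyc
  exact ⟨c, hc ▸ finiteIndex_map_subtype_range_powMonoidHom K.factorial_ne_zero⟩

/-- A virtually abelian, finitely generated `K`-CSA group with an element of infinite order,
in which every `⟨x^{K!}, y^{K!}⟩` is cyclic, is virtually cyclic. -/
theorem stmt_7 {G : Type*} [Group G] [Group.FG G] {K : ℕ} (hG : IsKCSAGroup K G)
    (hva : IsVirtAbelian (⊤ : Subgroup G))
    (hinf : ∃ g : G, ¬ IsOfFinOrder g)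
    (hcyc : ∀ x y : G,
      IsCyclic (Subgroup.closure ({x ^ K.factorial, y ^ K.factorial} : Set G))) :
    ∃ c : G, (Subgroup.zpowers c).FiniteIndex :=
  stmt_7_general hva hcyc
end

section
/- Let G be a group splitting as a graph of groups with finite edge groups, with Bass–Serre tree T, and let H be a group splitting as a graph of groups with infinite edge groups, with Bass–Serre tree S. If p : H → G is a homomorphism that is injective on the edge stabilizers of S and such that p(H_v) fixes a point of T for every vertex v of S, then p(H) fixes a point of T. -/
lemma getVert_map' {V V' : Type*} {G : SimpleGraph V} {G' : SimpleGraph V'}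
    (f : G →g G') {u v : V} (w : G.Walk u v) (i : ℕ) :
    (w.map f).getVert i = f (w.getVert i) := by
  induction w generalizing i with
  | nil => simp [SimpleGraph.Walk.getVert]
  | cons h q ih =>
    cases i with
    | zero => simp
    | succ n => simpa [SimpleGraph.Walk.getVert] using ih n

/-- An infinite subgroup fixes at most one vertex of a tree with finite edge stabilizers. -/
lemma fix_unique {G VT : Type*} [Group G] [MulAction G VT]
    (T : SimpleGraph VT) (hT : T.Connected ∧ T.IsAcyclic)
    (hactT : ∀ (g : G) (u v : VT), T.Adj u v → T.Adj (g • u) (g • v))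
    (hTedge : ∀ u v : VT, T.Adj u v →
      ((MulAction.stabilizer G u ⊓ MulAction.stabilizer G v : Subgroup G) : Set G).Finite)
    (K : Set G) (hK : K.Infinite) (x y : VT)
    (hx : ∀ g ∈ K, g • x = x) (hy : ∀ g ∈ K, g • y = y) : x = y := by
  classical
  by_contra hxy
  obtain ⟨w⟩ := hT.1.preconnected x y
  set pp : T.Path x y := w.toPath with hpp
  have hlen : 0 < pp.val.length := by
    rcases Nat.eq_zero_or_pos pp.val.length with h0 | h
    · exact absurd (pp.val.eq_of_length_eq_zero h0) hxy
    · exact h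
  set x₁ := pp.val.getVert 1 with hx₁
  have hadj : T.Adj x x₁ := by
    have := pp.val.adj_getVert_succ (i := 0) hlen
    simpa using this
  -- every g ∈ K fixes x₁
  have hfix : ∀ g ∈ K, g • x₁ = x₁ := by
    intro g hg
    -- graph hom given by g
    let f : T →g T := ⟨fun z => g • z, fun h => hactT g _ _ h⟩
    have hf : Function.Injective f := MulAction.injective g
    have hmap : (pp.val.map f).IsPath :=
      SimpleGraph.Walk.map_isPath_of_injective hf pp.property
    -- copy to a path from x to y
    let q : T.Path x y := ⟨(pp.val.map f).copy (hx g hg) (hy g hg), (SimpleGraph.Walk.isPath_copy _ _ _).mpr hmap⟩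
    have := hT.2.path_unique q pp
    have h1 : q.val.getVert 1 = pp.val.getVert 1 := by rw [this]
    rw [SimpleGraph.Walk.getVert_copy, getVert_map'] at h1
    exact h1
  have : K ⊆ ((MulAction.stabilizer G x ⊓ MulAction.stabilizer G x₁ : Subgroup G) : Set G) := by
    intro g hg
    exact ⟨hx g hg, hfix g hg⟩
  exact hK ((hTedge x x₁ hadj).subset this)


/-- Let `G` act on a tree `T` with finite edge stabilizers and `H` act on a tree `S` with
infinite edge stabilizers. If `p : H → G` is injective on the edge stabilizers of `S` and
each vertex stabilizer `H_v` has `p(H_v)` fixing a point of `T`, then `p(H)` fixes a point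
of `T`. -/
theorem stmt_19 {G H VT VS : Type*} [Group G] [Group H]
    (T : SimpleGraph VT) (hT : T.Connected ∧ T.IsAcyclic)
    (S : SimpleGraph VS) (hS : S.Connected ∧ S.IsAcyclic)
    [MulAction G VT] (hactT : ∀ (g : G) (u v : VT), T.Adj u v → T.Adj (g • u) (g • v))
    [MulAction H VS] (hactS : ∀ (h : H) (u v : VS), S.Adj u v → S.Adj (h • u) (h • v))
    (hTedge : ∀ u v : VT, T.Adj u v →
      ((MulAction.stabilizer G u ⊓ MulAction.stabilizer G v : Subgroup G) : Set G).Finite)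
    (hSedge : ∀ u v : VS, S.Adj u v →
      ((MulAction.stabilizer H u ⊓ MulAction.stabilizer H v : Subgroup H) : Set H).Infinite)
    (p : H →* G)
    (hinj : ∀ u v : VS, S.Adj u v → Set.InjOn p
      ((MulAction.stabilizer H u ⊓ MulAction.stabilizer H v : Subgroup H) : Set H))
    (hell : ∀ v : VS, ∃ x : VT, ∀ h ∈ MulAction.stabilizer H v, p h • x = x) :
    ∃ x : VT, ∀ h : H, p h • x = x := by
  classical
  by_cases hedge : ∃ u v : VS, S.Adj u v
  · obtain ⟨u₀, w₀, hadj₀⟩ := hedge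
    -- chosen fixed points
    choose xf hxf using hell
    -- image of infinite edge groups is infinite
    have himg : ∀ u v : VS, S.Adj u v →
        ((p '' ((MulAction.stabilizer H u ⊓ MulAction.stabilizer H v : Subgroup H) : Set H))
          : Set G).Infinite := fun u v huv =>
      (hSedge u v huv).image (hinj u v huv)
    -- x is constant along edges
    have hconst : ∀ u v : VS, S.Adj u v → xf u = xf v := by
      intro u v huv
      refine fix_unique T hT hactT hTedge _ (himg u v huv) (xf u) (xf v) ?_ ?_
      · rintro g ⟨h, hh, rfl⟩
        exact hxf u h hh.1
      · rintro g ⟨h, hh, rfl⟩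
        exact hxf v h hh.2
    -- hence constant on connected S
    have hall : ∀ {a b : VS}, S.Walk a b → xf a = xf b := by
      intro a b w
      induction w with
      | nil => rfl
      | cons h q ih => rw [hconst _ _ h, ih]
    refine ⟨xf u₀, fun h => ?_⟩
    -- use the edge (h • u₀, h • w₀)
    have hadj' : S.Adj (h • u₀) (h • w₀) := hactS h _ _ hadj₀
    refine fix_unique T hT hactT hTedge _ (himg _ _ hadj') (p h • xf u₀) (xf u₀) ?_ ?_
      <;> rintro g ⟨k, hk, rfl⟩
    · -- k stabilizes h•u₀ and h•w₀, so h⁻¹ k h stabilizes u₀ and w₀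
      have h1 : h⁻¹ * k * h ∈ MulAction.stabilizer H u₀ := by
        have := hk.1
        simp only [MulAction.mem_stabilizer_iff] at this ⊢
        rw [mul_smul, mul_smul, this, inv_smul_smul]
      have : p (h⁻¹ * k * h) • xf u₀ = xf u₀ := hxf u₀ _ h1
      simp only [map_mul, map_inv, mul_smul] at this
      calc p k • p h • xf u₀ = p h • (p h)⁻¹ • p k • p h • xf u₀ := by
            rw [smul_inv_smul]
        _ = p h • xf u₀ := by rw [this]
    · have : xf u₀ = xf (h • u₀) := (hall (hS.1.preconnected (h • u₀) u₀).some).symm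
      rw [this]
      exact hxf _ k hk.1
  · -- no edges: S connected means VS is a singleton, so every h stabilizes it
    push_neg at hedge
    obtain ⟨v₀⟩ := hS.1.nonempty
    have hsub : ∀ v : VS, v = v₀ := by
      intro v
      obtain ⟨w⟩ := hS.1.preconnected v v₀
      cases w with
      | nil => rfl
      | cons h _ => exact absurd h (hedge _ _)
    obtain ⟨x, hx⟩ := hell v₀
    exact ⟨x, fun h => hx h (by simpa [MulAction.mem_stabilizer_iff] using hsub (h • v₀))⟩
end
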